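/- arXiv:2108.00502 — 5 statements merged into one kernel-verified Lean document; each statement's English description precedes it below -/
import Mathlib

section
/- For all integers n, k with n ≥ 2k > 0 and every natural number m with m > n·ln(n/k) + n, the following holds: for every finite set L of colors and every assignment of a list S(v) ⊆ L with |S(v)| = m to each k-element subset v of [n], there exists a coloring c of the k-element subsets of [n] with c(v) ∈ S(v) for every v, such that any two disjoint k-element subsets receive different colors. In particular, the choice number of the Kneser graph satisfies ch(KG_{n,k}) ≤ n·ln(n/k) + n. -/
/-!
Send every color to a uniformly random point of `[n]` by a map `F`. A `k`-set `v` is *hit* if some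
color of its list `S v` lands in `v`; it fails to be hit with probability `(1 - k/n)^m`, so by the
union bound all `k`-sets are hit as soon as `C(n,k) (n-k)^m < n^m`, which follows from
`C(n,k) ≤ (e n / k)^k`, `1 - k/n ≤ exp (-k/n)` and the bound on `m`. Coloring each `v` by a color
of `S v` that `F` sends into `v` is proper: a common color of `u` and `v` is sent into `u ∩ v`.
-/

open Finset Real

theorem Nat.choose_le_exp_mul_div_pow (n k : ℕ) (hk : 0 < k) :
    (n.choose k : ℝ) ≤ (exp 1 * n / k) ^ k := by
  have hK : (0 : ℝ) < k := by exact_mod_cast hk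
  have hfac : (0 : ℝ) < k.factorial := by exact_mod_cast k.factorial_pos
  have hkk : (k : ℝ) ^ k ≤ exp 1 ^ k * k.factorial := by
    rw [← exp_nat_mul, mul_one, ← div_le_iff₀ hfac]
    exact Real.pow_div_factorial_le_exp (x := k) hK.le k
  calc (n.choose k : ℝ) ≤ n ^ k / k.factorial := Nat.choose_le_pow_div k n
    _ ≤ (exp 1 * n / k) ^ k := by
      rw [div_pow, mul_pow, div_le_div_iff₀ hfac (by positivity)]
      calc (n : ℝ) ^ k * k ^ k ≤ n ^ k * (exp 1 ^ k * k.factorial) := by gcongr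
        _ = exp 1 ^ k * n ^ k * k.factorial := by ring

theorem Nat.choose_mul_sub_pow_lt_pow {n k m : ℕ} (hk : 0 < k) (hkn : k ≤ n)
    (hm : (m : ℝ) > n * Real.log ((n : ℝ) / k) + n) :
    n.choose k * (n - k) ^ m < n ^ m := by
  have hN : (0 : ℝ) < n := by exact_mod_cast hk.trans_le hkn
  have hKN : (k : ℝ) ≤ n := by exact_mod_cast hkn
  have hsub : ((n : ℝ) - k) ^ m ≤ (n * exp (-(k / n))) ^ m := by
    have hle : (n : ℝ) - k ≤ n * exp (-(k / n)) := by
      have h := mul_le_mul_of_nonneg_left (add_one_le_exp (-((k : ℝ) / n))) hN.le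
      rwa [mul_add, mul_neg, mul_div_cancel₀ _ hN.ne', mul_one, neg_add_eq_sub] at h
    exact pow_le_pow_left₀ (sub_nonneg.mpr hKN) hle m
  -- `(e n / k)^k exp (-k/n)^m = exp (k (1 + log (n/k)) - k m / n)`, and the exponent is negative.
  have hexp : (exp 1 * n / k) ^ k * exp (-(k / n)) ^ m < 1 := by
    have hlog : exp 1 * n / k = exp (1 + Real.log (n / k)) := by
      rw [exp_add, exp_log (by positivity), mul_div_assoc]
    rw [hlog, ← exp_nat_mul, ← exp_nat_mul, ← exp_add, exp_lt_one_iff]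
    have hkm := mul_lt_mul_of_pos_right hm (by positivity : (0 : ℝ) < k / n)
    have hsplit : ((n : ℝ) * Real.log (n / k) + n) * (k / n) = k * (1 + Real.log (n / k)) := by
      field_simp; ring
    have hneg : (m : ℝ) * -(k / n) = -(m * (k / n)) := by ring
    linarith
  have hreal : (n.choose k : ℝ) * ((n : ℝ) - k) ^ m < (n : ℝ) ^ m :=
    calc (n.choose k : ℝ) * ((n : ℝ) - k) ^ m
        ≤ (exp 1 * n / k) ^ k * (n * exp (-(k / n))) ^ m := by
          gcongr ?_ * ?_
          exact Nat.choose_le_exp_mul_div_pow n k hk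
      _ = n ^ m * ((exp 1 * n / k) ^ k * exp (-(k / n)) ^ m) := by ring
      _ < n ^ m := mul_lt_of_lt_one_right (by positivity) hexp
  rw [← Nat.cast_sub hkn] at hreal
  exact_mod_cast hreal

theorem Finset.card_pi_ite_compl_univ {α X : Type*} [DecidableEq α] [Fintype X] [DecidableEq X]
    (L S : Finset α) (hSL : S ⊆ L) (A : Finset X) :
    #(L.pi fun x => if x ∈ S then Aᶜ else univ) = (Fintype.card X - #A) ^ #S *
      Fintype.card X ^ (#L - #S) := by
  have hfilter : #(L.filter (· ∈ S)) = #S := by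
    rw [filter_mem_eq_inter, inter_eq_right.mpr hSL]
  have hfilter_not : #(L.filter (· ∉ S)) = #L - #S := by
    have := card_filter_add_card_filter_not (s := L) (p := (· ∈ S))
    omega
  have hcard : ∀ x ∈ L, #(if x ∈ S then Aᶜ else univ) =
      if x ∈ S then Fintype.card X - #A else Fintype.card X := by
    intro x _
    split_ifs <;> simp [card_compl]
  rw [card_pi, prod_congr rfl hcard, prod_ite, prod_const, prod_const, hfilter, hfilter_not]

theorem exists_forall_exists_apply_mem {ι α X : Type*} [Fintype ι] [Fintype X] [Nonempty X]
    {m a : ℕ} (S : ι → Finset α) (A : ι → Finset X) (hS : ∀ i, #(S i) = m)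
    (hA : ∀ i, #(A i) = a) (h : Fintype.card ι * (Fintype.card X - a) ^ m < Fintype.card X ^ m) :
    ∃ F : α → X, ∀ i, ∃ x ∈ S i, F x ∈ A i := by
  classical
  cases isEmpty_or_nonempty ι with
  | inl _ => exact ⟨fun _ => Classical.arbitrary X, isEmptyElim⟩
  | inr hι =>
  set L := univ.biUnion S
  have hSL : ∀ i, S i ⊆ L := fun i => subset_biUnion_of_mem S (mem_univ i)
  have hmL : m ≤ #L := hS hι.some ▸ card_le_card (hSL _)
  -- `Bad i` consists of the maps on `L` sending no color of `S i` into `A i`.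
  set Bad : ι → Finset (∀ x ∈ L, X) := fun i => L.pi fun x => if x ∈ S i then (A i)ᶜ else univ
  have hcard : #(univ.biUnion Bad) < #(L.pi fun _ => (univ : Finset X)) :=
    calc #(univ.biUnion Bad)
        ≤ Fintype.card ι * ((Fintype.card X - a) ^ m * Fintype.card X ^ (#L - m)) := by
          refine card_biUnion_le_card_mul _ _ _ fun i _ => ?_
          rw [card_pi_ite_compl_univ L _ (hSL i), hS, hA]
      _ < Fintype.card X ^ m * Fintype.card X ^ (#L - m) := by
          rw [← mul_assoc]
          exact Nat.mul_lt_mul_of_pos_right h (Nat.pow_pos Fintype.card_pos)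
      _ = #(L.pi fun _ => (univ : Finset X)) := by
          rw [← pow_add, Nat.add_sub_cancel' hmL, card_pi, prod_const, card_univ]
  obtain ⟨f, -, hf⟩ := exists_mem_notMem_of_card_lt_card hcard
  refine ⟨fun x => if hx : x ∈ L then f x hx else Classical.arbitrary X, fun i => ?_⟩
  by_contra! hmiss
  refine hf (mem_biUnion.mpr ⟨i, mem_univ i, mem_pi.mpr fun x hx => ?_⟩)
  split_ifs with hxS
  · simpa [hx] using hmiss x hxS
  · exact mem_univ _

theorem exists_coloring_of_forall_exists_apply_mem {ι α X : Type*} (S : ι → Finset α)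
    (A : ι → Finset X) (F : α → X) (hF : ∀ i, ∃ x ∈ S i, F x ∈ A i) :
    ∃ c : ι → α, (∀ i, c i ∈ S i) ∧ ∀ i j, Disjoint (A i) (A j) → c i ≠ c j := by
  choose c hcS hcA using hF
  refine ⟨c, hcS, fun i j hij hc => disjoint_left.mp hij (hcA i) ?_⟩
  exact hc ▸ hcA j

theorem stmt_0_general {α : Type*} (n k m : ℕ) (hk : 0 < k) (hn : 2 * k ≤ n)
    (hm : (m : ℝ) > n * Real.log ((n : ℝ) / k) + n)
    (S : {v : Finset (Fin n) // v.card = k} → Finset α)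
    (hScard : ∀ v, (S v).card = m) :
    ∃ c : {v : Finset (Fin n) // v.card = k} → α,
      (∀ v, c v ∈ S v) ∧
      ∀ u v : {v : Finset (Fin n) // v.card = k}, Disjoint u.1 v.1 → c u ≠ c v := by
  have hkn : k ≤ n := by omega
  have : Nonempty (Fin n) := ⟨⟨0, hk.trans_le hkn⟩⟩
  have hunion : Fintype.card {v : Finset (Fin n) // v.card = k} * (Fintype.card (Fin n) - k) ^ m <
      Fintype.card (Fin n) ^ m := by
    rw [Fintype.card_finset_len, Fintype.card_fin]
    exact Nat.choose_mul_sub_pow_lt_pow hk hkn hm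
  obtain ⟨F, hF⟩ := exists_forall_exists_apply_mem S Subtype.val hScard (fun v => v.2) hunion
  exact exists_coloring_of_forall_exists_apply_mem S Subtype.val F hF

/-- Theorem 1 (upper bound): if each `k`-subset of `[n]` gets a list of `m` colors
with `m > n·ln(n/k) + n`, then there is a proper list coloring of the Kneser graph
`KG_{n,k}` (disjoint `k`-sets get different colors). -/
theorem stmt_0 {α : Type*} (n k m : ℕ) (hk : 0 < k) (hn : 2 * k ≤ n)
    (hm : (m : ℝ) > n * Real.log ((n : ℝ) / k) + n)
    (L : Finset α)
    (S : {v : Finset (Fin n) // v.card = k} → Finset α)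
    (hSL : ∀ v, S v ⊆ L) (hScard : ∀ v, (S v).card = m) :
    ∃ c : {v : Finset (Fin n) // v.card = k} → α,
      (∀ v, c v ∈ S v) ∧
      ∀ u v : {v : Finset (Fin n) // v.card = k}, Disjoint u.1 v.1 → c u ≠ c v :=
  stmt_0_general n k m hk hn hm S hScard
end

section
/- Let n, k be integers with n ≥ 2k > 0, let L be a finite set of colors, and let S assign to each k-element subset v of [n] a set S(v) ⊆ L with |S(v)| ≥ m, where m is a natural number satisfying m > n·ln(n/k) + n. Then there exists a function f : L → [n] such that for every k-element subset v of [n] there is a color γ ∈ S(v) with f(γ) ∈ v. -/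
open Finset

lemma pow_self_le_fact_mul_exp (k : ℕ) : (k:ℝ)^k ≤ k.factorial * Real.exp k := by
  have h := Real.sum_le_exp_of_nonneg (x := (k:ℝ)) (by positivity) (k+1)
  have hterm : (k:ℝ)^k / k.factorial ≤ Real.exp k :=
    le_trans (Finset.single_le_sum (f := fun i => (k:ℝ)^i / i.factorial)
      (fun i _ => by positivity) (Finset.self_mem_range_succ k)) h
  rw [div_le_iff₀ (by positivity)] at hterm
  linarith [hterm]

lemma key_ineq (n k m : ℕ) (hk : 0 < k) (hn : 2*k ≤ n)
    (hm : (m:ℝ) > n * Real.log ((n:ℝ)/k) + n) :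
    (n.choose k : ℝ) * ((n:ℝ) - k)^m < (n:ℝ)^m := by
  have hy : (0:ℝ) < k := by exact_mod_cast hk
  have hx : (0:ℝ) < n := by
    have : 0 < n := lt_of_lt_of_le (by omega) hn
    exact_mod_cast this
  have hyx : (k:ℝ) < n := by
    have : k < n := by omega
    exact_mod_cast this
  -- key scalar inequality : x^k * exp(-(m*k/n)) < k!
  have hscalar : (n:ℝ)^k * Real.exp (-(m*(k/n:ℝ))) < k.factorial := by
    have h1 : (m:ℝ)*(k/n) > k * Real.log ((n:ℝ)/k) + k := by
      have h2 : (m:ℝ) > n * Real.log ((n:ℝ)/k) + n := hm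
      have := mul_lt_mul_of_pos_right h2 (div_pos hy hx)
      calc (k:ℝ) * Real.log ((n:ℝ)/k) + k
          = (↑n * Real.log (↑n / ↑k) + ↑n) * (↑k / ↑n) := by field_simp
        _ < (m:ℝ) * (k/n) := this
    have h3 : Real.exp (-(m*(k/n:ℝ))) < Real.exp (-(k * Real.log ((n:ℝ)/k) + k)) :=
      Real.exp_lt_exp.2 (by linarith)
    have h4 : Real.exp (-((k:ℝ) * Real.log ((n:ℝ)/k) + k)) = ((k:ℝ)/n)^k * Real.exp (-(k:ℝ)) := by
      rw [neg_add, Real.exp_add]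
      congr 1
      have : -((k:ℝ) * Real.log ((n:ℝ)/k)) = (k:ℕ) * Real.log ((k:ℝ)/n) := by
        rw [show (k:ℝ)/n = ((n:ℝ)/k)⁻¹ by field_simp, Real.log_inv]; ring
      rw [this, Real.exp_nat_mul, Real.exp_log (by positivity)]
    calc (n:ℝ)^k * Real.exp (-(m*(k/n:ℝ)))
        < (n:ℝ)^k * (((k:ℝ)/n)^k * Real.exp (-(k:ℝ))) := by
          rw [h4] at h3; exact mul_lt_mul_of_pos_left h3 (by positivity)
      _ = (k:ℝ)^k * Real.exp (-(k:ℝ)) := by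
          rw [div_pow]; field_simp
      _ ≤ k.factorial := by
          have := pow_self_le_fact_mul_exp k
          rw [Real.exp_neg]
          rw [mul_inv_le_iff₀ (Real.exp_pos _)]
          linarith [this]
  have hchoose : (n.choose k : ℝ) * k.factorial ≤ (n:ℝ)^k := by
    have h := Nat.descFactorial_le_pow n k
    rw [Nat.descFactorial_eq_factorial_mul_choose] at h
    have : ((k.factorial * n.choose k : ℕ) : ℝ) ≤ ((n^k : ℕ) : ℝ) := by exact_mod_cast h
    push_cast at this; linarith
  have hone : (0:ℝ) ≤ 1 - (k:ℝ)/n := by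
    rw [sub_nonneg, div_le_one hx]; linarith
  have hb : ((n:ℝ)-k)^m ≤ (n:ℝ)^m * Real.exp (-(m*(k/n:ℝ))) := by
    have h1 : (n:ℝ)-k = n * (1 - (k:ℝ)/n) := by field_simp
    have h2 : (1 - (k:ℝ)/n) ≤ Real.exp (-((k:ℝ)/n)) := by
      have := Real.add_one_le_exp (-((k:ℝ)/n)); linarith
    calc ((n:ℝ)-k)^m = (n:ℝ)^m * (1-(k:ℝ)/n)^m := by rw [h1, mul_pow]
      _ ≤ (n:ℝ)^m * Real.exp (-((k:ℝ)/n))^m :=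
          mul_le_mul_of_nonneg_left (pow_le_pow_left₀ hone h2 m) (by positivity)
      _ = (n:ℝ)^m * Real.exp (-(m*(k/n:ℝ))) := by
          rw [← Real.exp_nat_mul]; congr 1; ring
  set A := Real.exp (-(m*(k/n:ℝ))) with hA
  have hA0 : (0:ℝ) < A := Real.exp_pos _
  have h5 : (n.choose k : ℝ) * A < 1 := by
    have h6 : (n.choose k : ℝ) * A * k.factorial ≤ (n:ℝ)^k * A := by
      calc (n.choose k:ℝ)*A*k.factorial = (n.choose k:ℝ)*k.factorial*A := by ring
        _ ≤ (n:ℝ)^k * A := mul_le_mul_of_nonneg_right hchoose hA0.le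
    have hf : (0:ℝ) < k.factorial := by positivity
    nlinarith [hscalar]
  calc (n.choose k : ℝ) * ((n:ℝ)-k)^m
      ≤ (n.choose k : ℝ) * ((n:ℝ)^m * A) :=
        mul_le_mul_of_nonneg_left hb (Nat.cast_nonneg _)
    _ = (n:ℝ)^m * ((n.choose k:ℝ)*A) := by ring
    _ < (n:ℝ)^m * 1 := mul_lt_mul_of_pos_left h5 (by positivity)
    _ = (n:ℝ)^m := mul_one _

lemma key_ineq_nat (n k m c : ℕ) (hk : 0 < k) (hn : 2*k ≤ n)
    (hm : (m:ℝ) > n * Real.log ((n:ℝ)/k) + n) (hmc : m ≤ c) :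
    n.choose k * ((n-k)^m * n^(c-m)) < n^c := by
  have hkn : k ≤ n := by omega
  have h1 : n.choose k * (n-k)^m < n^m := by
    have := key_ineq n k m hk hn hm
    have hc : ((n-k:ℕ):ℝ) = (n:ℝ) - k := by push_cast [hkn]; ring
    have : ((n.choose k * (n-k)^m : ℕ) : ℝ) < ((n^m : ℕ) : ℝ) := by
      push_cast [hc]; exact this
    exact_mod_cast this
  calc n.choose k * ((n-k)^m * n^(c-m)) = (n.choose k * (n-k)^m) * n^(c-m) := by ring
    _ < n^m * n^(c-m) := by
        apply Nat.mul_lt_mul_of_lt_of_le h1 le_rfl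
        exact pow_pos (by omega) _
    _ = n^c := by rw [← pow_add]; congr 1; omega

/-- Key existence step for the upper bound: if each `k`-subset `v` of `[n]` gets a list
`S v ⊆ L` with `|S v| ≥ m` and `m > n·ln(n/k) + n`, then there is `f : L → [n]` such
that every `v` has a color `γ ∈ S v` with `f γ ∈ v`. -/
theorem stmt_1 {α : Type*} (n k m : ℕ) (hk : 0 < k) (hn : 2 * k ≤ n)
    (hm : (m : ℝ) > n * Real.log ((n : ℝ) / k) + n)
    (L : Finset α)
    (S : {v : Finset (Fin n) // v.card = k} → Finset α)
    (hSL : ∀ v, S v ⊆ L) (hScard : ∀ v, m ≤ (S v).card) :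
    ∃ f : {x // x ∈ L} → Fin n,
      ∀ v : {v : Finset (Fin n) // v.card = k},
        ∃ γ : α, ∃ h : γ ∈ S v, f ⟨γ, hSL v h⟩ ∈ v.1 := by
  classical
  by_contra hcon
  push_neg at hcon
  obtain ⟨v₀s, _, hv₀c⟩ := Finset.exists_subset_card_eq
    (show k ≤ (Finset.univ : Finset (Fin n)).card by simpa using by omega)
  have hmL : m ≤ L.card :=
    le_trans (hScard ⟨v₀s, hv₀c⟩) (Finset.card_le_card (hSL ⟨v₀s, hv₀c⟩))
  let Bv : {v : Finset (Fin n) // v.card = k} → Finset ({x // x ∈ L} → Fin n) :=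
    fun v => Finset.univ.filter (fun f => ∀ γ (h : γ ∈ S v), f ⟨γ, hSL v h⟩ ∉ v.1)
  have hcard : ∀ v, (Bv v).card ≤ (n-k)^m * n^(L.card - m) := by
    intro v
    have hinj : Fintype.card {f : {x // x ∈ L} → Fin n // f ∈ Bv v} ≤
        Fintype.card (({γ // γ ∈ S v} → {i // i ∈ (v.1)ᶜ}) × ({γ // γ ∈ L \ S v} → Fin n)) := by
      apply Fintype.card_le_of_injective
        (fun fp => (fun γ => ⟨fp.1 ⟨γ.1, hSL v γ.2⟩,
            Finset.mem_compl.2 ((Finset.mem_filter.1 fp.2).2 γ.1 γ.2)⟩,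
          fun γ => fp.1 ⟨γ.1, (Finset.mem_sdiff.1 γ.2).1⟩))
      rintro ⟨f, hf⟩ ⟨g, hg⟩ hfg
      simp only [Prod.mk.injEq] at hfg
      apply Subtype.ext
      funext ⟨γ, hγ⟩
      by_cases h : γ ∈ S v
      · exact Subtype.ext_iff.1 (congrFun hfg.1 ⟨γ, h⟩)
      · exact congrFun hfg.2 ⟨γ, Finset.mem_sdiff.2 ⟨hγ, h⟩⟩
    have hc1 : Fintype.card {f : {x // x ∈ L} → Fin n // f ∈ Bv v} = (Bv v).card :=
      Fintype.card_coe _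
    have hc2 : Fintype.card (({γ // γ ∈ S v} → {i // i ∈ (v.1)ᶜ}) × ({γ // γ ∈ L \ S v} → Fin n))
        = (n-k)^(S v).card * n^(L.card - (S v).card) := by
      rw [Fintype.card_prod, Fintype.card_fun, Fintype.card_fun, Fintype.card_coe,
        Fintype.card_coe, Fintype.card_coe, Fintype.card_fin,
        Finset.card_compl, Fintype.card_fin, v.2, Finset.card_sdiff_of_subset (hSL v)]
    have hsv : m ≤ (S v).card := hScard v
    have hsvL : (S v).card ≤ L.card := Finset.card_le_card (hSL v)
    have hmono : (n-k)^(S v).card * n^(L.card - (S v).card) ≤ (n-k)^m * n^(L.card - m) := by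
      calc (n-k)^(S v).card * n^(L.card - (S v).card)
          = (n-k)^m * ((n-k)^((S v).card - m) * n^(L.card - (S v).card)) := by
            rw [← mul_assoc, ← pow_add, show m + ((S v).card - m) = (S v).card from by omega]
        _ ≤ (n-k)^m * (n^((S v).card - m) * n^(L.card - (S v).card)) := by
            apply Nat.mul_le_mul_left
            exact Nat.mul_le_mul_right _ (Nat.pow_le_pow_left (by omega) _)
        _ = (n-k)^m * n^(L.card - m) := by
            rw [← pow_add, show (S v).card - m + (L.card - (S v).card) = L.card - m from by omega]
    rw [← hc1]; rw [hc2] at hinj; exact le_trans hinj hmono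
  have hcover : (Finset.univ : Finset ({x // x ∈ L} → Fin n)) ⊆
      Finset.univ.biUnion Bv := by
    intro f _
    obtain ⟨v, hv⟩ := hcon f
    exact Finset.mem_biUnion.2 ⟨v, Finset.mem_univ _,
      Finset.mem_filter.2 ⟨Finset.mem_univ _, hv⟩⟩
  have htot : n ^ L.card ≤ n.choose k * ((n-k)^m * n^(L.card - m)) := by
    calc n ^ L.card = Fintype.card ({x // x ∈ L} → Fin n) := by
          rw [Fintype.card_fun, Fintype.card_coe, Fintype.card_fin]
      _ = (Finset.univ : Finset ({x // x ∈ L} → Fin n)).card := Finset.card_univ.symm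
      _ ≤ (Finset.univ.biUnion Bv).card := Finset.card_le_card hcover
      _ ≤ ∑ v, (Bv v).card := Finset.card_biUnion_le
      _ ≤ ∑ _v : {v : Finset (Fin n) // v.card = k}, (n-k)^m * n^(L.card - m) :=
          Finset.sum_le_sum (fun v _ => hcard v)
      _ = Fintype.card {v : Finset (Fin n) // v.card = k} * ((n-k)^m * n^(L.card - m)) := by
          rw [Finset.sum_const, Finset.card_univ, smul_eq_mul]
      _ = n.choose k * ((n-k)^m * n^(L.card - m)) := by
          rw [Fintype.card_finset_len, Fintype.card_fin]
  exact absurd htot (not_le.2 (key_ineq_nat n k m L.card hk hn hm hmL))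
end

section
/- Let n, k be positive integers, let F be an intersecting family of k-element subsets of [n], and fix an integer s ≥ 2. Then at least one of the following holds: (1) there exists a family G of s-element subsets of [n] with |G| ≤ k^s such that every member of F contains some member of G; or (2) there exists a set I ⊆ [n] with |I| ≤ s − 1 such that every member of F contains some element of I. -/
/-- Structural dichotomy for intersecting families: an intersecting family `F` of
`k`-subsets of `[n]` is covered either by the stars of at most `k^s` many `s`-sets,
or by the stars of the elements of a set `I` with `|I| ≤ s - 1`. -/
theorem stmt_5 (n k s : ℕ) (hn : 0 < n) (hk : 0 < k) (hs : 2 ≤ s)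
    (F : Finset (Finset (Fin n)))
    (hcard : ∀ A ∈ F, A.card = k)
    (hint : ∀ A ∈ F, ∀ B ∈ F, (A ∩ B).Nonempty) :
    (∃ G : Finset (Finset (Fin n)), (∀ S ∈ G, S.card = s) ∧ G.card ≤ k ^ s ∧
        ∀ A ∈ F, ∃ S ∈ G, S ⊆ A) ∨
    (∃ I : Finset (Fin n), I.card ≤ s - 1 ∧ ∀ A ∈ F, ∃ i ∈ I, i ∈ A) := by
  classical
  by_cases h2 : ∃ I : Finset (Fin n), I.card ≤ s - 1 ∧ ∀ A ∈ F, ∃ i ∈ I, i ∈ A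
  · exact Or.inr h2
  push_neg at h2
  -- h2 : ∀ I, I.card ≤ s - 1 → ∃ A ∈ F, ∀ i ∈ I, i ∉ A
  left
  choose B hBF hBdisj using h2
  set B' : Finset (Fin n) → Finset (Fin n) :=
    fun S => if h : S.card ≤ s - 1 then B S h else ∅ with hB'def
  have hB'F : ∀ S : Finset (Fin n), S.card ≤ s - 1 → B' S ∈ F := by
    intro S h; simp only [hB'def, dif_pos h]; exact hBF S h
  have hB'disj : ∀ S : Finset (Fin n), S.card ≤ s - 1 → ∀ i ∈ S, i ∉ B' S := by
    intro S h; simp only [hB'def, dif_pos h]; exact hBdisj S h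
  have hB'card : ∀ S : Finset (Fin n), S.card ≤ s - 1 → (B' S).card = k := by
    intro S h; exact hcard _ (hB'F S h)
  let G : ℕ → Finset (Finset (Fin n)) :=
    fun j => Nat.rec {(∅ : Finset (Fin n))}
      (fun _ Gj => Gj.biUnion (fun S => (B' S).image (fun x => insert x S))) j
  have key : ∀ j, j ≤ s → (∀ S ∈ G j, S.card = j) ∧ (G j).card ≤ k ^ j ∧
      (∀ A ∈ F, ∃ S ∈ G j, S ⊆ A) := by
    intro j
    induction j with
    | zero =>
      intro _
      refine ⟨?_, ?_, ?_⟩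
      · intro S hS
        simp only [Finset.card_eq_zero]
        exact Finset.mem_singleton.1 hS
      · simp [G]
      · intro A hA
        exact ⟨∅, by simp [G], Finset.empty_subset A⟩
    | succ j ih =>
      intro hj
      obtain ⟨hc, hcard', hcov⟩ := ih (by omega)
      have hjs : ∀ S ∈ G j, S.card ≤ s - 1 := by
        intro S hS; rw [hc S hS]; omega
      have hGsucc : G (j+1) =
          (G j).biUnion (fun S => (B' S).image (fun x => insert x S)) := rfl
      refine ⟨?_, ?_, ?_⟩
      · intro S' hS'
        rw [hGsucc, Finset.mem_biUnion] at hS'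
        obtain ⟨S, hS, hS'mem⟩ := hS'
        rw [Finset.mem_image] at hS'mem
        obtain ⟨x, hx, rfl⟩ := hS'mem
        have hxS : x ∉ S := fun hxS => hB'disj S (hjs S hS) x hxS hx
        rw [Finset.card_insert_of_notMem hxS, hc S hS]
      · rw [hGsucc]
        calc ((G j).biUnion (fun S => (B' S).image (fun x => insert x S))).card
            ≤ ∑ S ∈ G j, ((B' S).image (fun x => insert x S)).card :=
              Finset.card_biUnion_le
          _ ≤ ∑ S ∈ G j, k := by
              refine Finset.sum_le_sum ?_
              intro S hS
              calc ((B' S).image (fun x => insert x S)).card ≤ (B' S).card :=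
                    Finset.card_image_le
                _ = k := hB'card S (hjs S hS)
          _ = (G j).card * k := by rw [Finset.sum_const, smul_eq_mul]
          _ ≤ k ^ j * k := Nat.mul_le_mul_right k hcard'
          _ = k ^ (j + 1) := (pow_succ k j).symm
      · intro A hA
        obtain ⟨S, hS, hSA⟩ := hcov A hA
        have hBS : B' S ∈ F := hB'F S (hjs S hS)
        obtain ⟨x, hx⟩ := hint A hA (B' S) hBS
        rw [Finset.mem_inter] at hx
        refine ⟨insert x S, ?_, Finset.insert_subset hx.1 hSA⟩
        rw [hGsucc, Finset.mem_biUnion]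
        exact ⟨S, hS, Finset.mem_image.2 ⟨x, hx.2, rfl⟩⟩
  obtain ⟨h1, h2', h3⟩ := key s le_rfl
  exact ⟨G s, h1, h2', h3⟩
end

section
/- Let n, k be positive integers and let F be an intersecting family of k-element subsets of [n]. Let ℓ be a positive integer with ℓ ≤ τ(F), where τ(F) is the covering number of F. Then there exists a family G of ℓ-element subsets of [n] with |G| ≤ k^ℓ such that every member of F contains some member of G. -/
/-!
Build the families level by level, starting from `{∅}`. If every member of `F` contains a
member of a family `G` of `i`-sets and `i < τ(F)`, then no `S ∈ G` is a cover, so some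
`B_S ∈ F` misses `S`. Every `A ∈ F` meets `B_S`, so the `(i+1)`-sets `insert x S` with
`x ∈ B_S` again have the property, and there are at most `k` of them for each `S`.
-/

namespace IntersectingFamily

variable {α : Type*} [DecidableEq α] {F : Finset (Finset α)} {ℓ : ℕ}

theorem exists_mem_disjoint_of_card_lt
    (hτ : ∀ C : Finset α, (∀ A ∈ F, (A ∩ C).Nonempty) → ℓ ≤ C.card)
    {S : Finset α} (hS : S.card < ℓ) : ∃ B ∈ F, Disjoint B S := by
  by_contra! h
  refine hS.not_ge (hτ S fun A hA => ?_)
  exact Finset.not_disjoint_iff_nonempty_inter.mp (h A hA)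

theorem exists_succ_level {k i : ℕ}
    (hint : ∀ A ∈ F, ∀ B ∈ F, (A ∩ B).Nonempty)
    (hcard : ∀ A ∈ F, A.card ≤ k)
    (hτ : ∀ C : Finset α, (∀ A ∈ F, (A ∩ C).Nonempty) → ℓ ≤ C.card)
    (hi : i < ℓ) {G : Finset (Finset α)} (hGcard : ∀ S ∈ G, S.card = i)
    (hGF : ∀ A ∈ F, ∃ S ∈ G, S ⊆ A) :
    ∃ G' : Finset (Finset α), G'.card ≤ G.card * k ∧ (∀ S ∈ G', S.card = i + 1) ∧
      ∀ A ∈ F, ∃ S ∈ G', S ⊆ A := by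
  have hB : ∀ S ∈ G, ∃ B, B ∈ F ∧ Disjoint B S := fun S hS =>
    exists_mem_disjoint_of_card_lt hτ ((hGcard S hS).trans_lt hi)
  choose! B hBF hBS using hB
  refine ⟨G.biUnion fun S => (B S).image (insert · S), ?_, ?_, ?_⟩
  · calc (G.biUnion fun S => (B S).image (insert · S)).card
        ≤ ∑ S ∈ G, ((B S).image (insert · S)).card := Finset.card_biUnion_le
      _ ≤ ∑ _S ∈ G, k := Finset.sum_le_sum fun S hS =>
          Finset.card_image_le.trans (hcard _ (hBF S hS))
      _ = G.card * k := by rw [Finset.sum_const, smul_eq_mul]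
  · simp only [Finset.mem_biUnion, Finset.mem_image]
    rintro _ ⟨S, hS, x, hx, rfl⟩
    rw [Finset.card_insert_of_notMem (Finset.disjoint_left.mp (hBS S hS) hx), hGcard S hS]
  · intro A hA
    obtain ⟨S, hS, hSA⟩ := hGF A hA
    obtain ⟨x, hx⟩ := hint A hA (B S) (hBF S hS)
    rw [Finset.mem_inter] at hx
    exact ⟨insert x S, Finset.mem_biUnion.mpr ⟨S, hS, Finset.mem_image_of_mem _ hx.2⟩,
      Finset.insert_subset hx.1 hSA⟩

theorem exists_level_card_le_pow {k : ℕ}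
    (hint : ∀ A ∈ F, ∀ B ∈ F, (A ∩ B).Nonempty)
    (hcard : ∀ A ∈ F, A.card ≤ k)
    (hτ : ∀ C : Finset α, (∀ A ∈ F, (A ∩ C).Nonempty) → ℓ ≤ C.card) :
    ∀ i ≤ ℓ, ∃ G : Finset (Finset α), G.card ≤ k ^ i ∧ (∀ S ∈ G, S.card = i) ∧
      ∀ A ∈ F, ∃ S ∈ G, S ⊆ A
  | 0, _ => ⟨{∅}, by simp, by simp, fun _ _ => ⟨∅, by simp, Finset.empty_subset _⟩⟩
  | i + 1, hi => by
    obtain ⟨G, hGle, hGcard, hGF⟩ := exists_level_card_le_pow hint hcard hτ i (by omega)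
    obtain ⟨G', hG'le, hG'card, hG'F⟩ := exists_succ_level hint hcard hτ hi hGcard hGF
    exact ⟨G', hG'le.trans (by rw [pow_succ]; gcongr), hG'card, hG'F⟩

end IntersectingFamily

theorem stmt_6_general (n k ℓ : ℕ)
    (F : Finset (Finset (Fin n)))
    (hcard : ∀ A ∈ F, A.card = k)
    (hint : ∀ A ∈ F, ∀ B ∈ F, (A ∩ B).Nonempty)
    (hτ : ∀ C : Finset (Fin n), (∀ A ∈ F, (A ∩ C).Nonempty) → ℓ ≤ C.card) :
    ∃ G : Finset (Finset (Fin n)), G.card ≤ k ^ ℓ ∧ (∀ S ∈ G, S.card = ℓ) ∧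
      ∀ A ∈ F, ∃ S ∈ G, S ⊆ A :=
  IntersectingFamily.exists_level_card_le_pow hint (fun A hA => (hcard A hA).le) hτ ℓ le_rfl

/-- Erdős–Lovász-type inductive construction: if `F` is an intersecting family of
`k`-subsets of `[n]` and `ℓ` is a positive integer with `ℓ ≤ τ(F)` (every cover of `F`
has at least `ℓ` elements), then there is a family `G` of at most `k^ℓ` many `ℓ`-sets
such that every member of `F` contains a member of `G`. -/
theorem stmt_6 (n k ℓ : ℕ) (hn : 0 < n) (hk : 0 < k) (hl : 0 < ℓ)
    (F : Finset (Finset (Fin n)))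
    (hcard : ∀ A ∈ F, A.card = k)
    (hint : ∀ A ∈ F, ∀ B ∈ F, (A ∩ B).Nonempty)
    (hτ : ∀ C : Finset (Fin n), (∀ A ∈ F, (A ∩ C).Nonempty) → ℓ ≤ C.card) :
    ∃ G : Finset (Finset (Fin n)), G.card ≤ k ^ ℓ ∧ (∀ S ∈ G, S.card = ℓ) ∧
      ∀ A ∈ F, ∃ S ∈ G, S ⊆ A :=
  stmt_6_general n k ℓ F hcard hint hτ
end

section
/- Let n, k be positive integers and fix an integer s ≥ 2. Suppose the family of all k-element subsets of [n] is partitioned into u intersecting families F_1, …, F_u. Then there exist families K_1, …, K_u of k-element subsets of [n] with F_j ⊆ K_j for every j, where each K_j is of one of the following two forms: (type i) K_j is the family of all k-subsets of [n] that intersect a fixed set I_j ⊆ [n] with |I_j| ≤ s − 1; or (type ii) K_j is the family of all k-subsets of [n] that contain at least one member of a fixed family G_j of s-element subsets of [n] with |G_j| ≤ k^s. -/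
open Classical in
lemma dich_aux (n k : ℕ) (F : Finset (Finset (Fin n)))
    (hcard : ∀ A ∈ F, A.card = k)
    (hint : ∀ A ∈ F, ∀ B ∈ F, (A ∩ B).Nonempty) :
    ∀ t : ℕ,
      (∃ I : Finset (Fin n), I.card ≤ t - 1 ∧ ∀ A ∈ F, ∃ i ∈ I, i ∈ A) ∨
      (∃ G : Finset (Finset (Fin n)), G.card ≤ k ^ t ∧ (∀ S ∈ G, S.card = t) ∧
        ∀ A ∈ F, ∃ S ∈ G, S ⊆ A) := by
  intro t
  induction t with
  | zero =>
    right
    refine ⟨{∅}, by simp, by simp, fun A _ => ⟨∅, by simp⟩⟩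
  | succ t ih =>
    rcases ih with ⟨I, hI1, hI2⟩ | ⟨G, hG1, hG2, hG3⟩
    · left; exact ⟨I, by omega, hI2⟩
    by_cases hc : ∃ S ∈ G, ∀ A ∈ F, ∃ i ∈ S, i ∈ A
    · left
      obtain ⟨S, hS, hScov⟩ := hc
      exact ⟨S, by rw [hG2 S hS]; omega, hScov⟩
    push_neg at hc
    have h : ∀ S : Finset (Fin n), S ∈ G → ∃ C, C ∈ F ∧ ∀ i ∈ S, i ∉ C := by
      intro S hS
      obtain ⟨A, hA, hA2⟩ := hc S hS
      exact ⟨A, hA, fun i hi hiA => hA2 i hi hiA⟩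
    choose C hC1 hC2 using h
    right
    refine ⟨G.attach.biUnion (fun S => (C S.1 S.2).image (fun x => insert x S.1)), ?_, ?_, ?_⟩
    · calc (G.attach.biUnion _).card
          ≤ ∑ S ∈ G.attach, ((C S.1 S.2).image (fun x => insert x S.1)).card :=
            Finset.card_biUnion_le
        _ ≤ ∑ S ∈ G.attach, k := by
            apply Finset.sum_le_sum
            intro S _
            exact (Finset.card_image_le).trans (le_of_eq (hcard _ (hC1 S.1 S.2)))
        _ = G.card * k := by rw [Finset.sum_const, Finset.card_attach, smul_eq_mul]
        _ ≤ k ^ t * k := Nat.mul_le_mul_right k hG1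
        _ = k ^ (t + 1) := by ring
    · intro S hS
      simp only [Finset.mem_biUnion, Finset.mem_attach, Finset.mem_image, true_and] at hS
      obtain ⟨T, x, hx, rfl⟩ := hS
      rw [Finset.card_insert_of_notMem (fun hxT => hC2 T.1 T.2 x hxT hx), hG2 T.1 T.2]
    · intro A hA
      obtain ⟨S, hS, hSA⟩ := hG3 A hA
      obtain ⟨x, hx⟩ := hint A hA (C S hS) (hC1 S hS)
      rw [Finset.mem_inter] at hx
      refine ⟨insert x S, ?_, Finset.insert_subset hx.1 hSA⟩
      simp only [Finset.mem_biUnion, Finset.mem_attach, Finset.mem_image, true_and]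
      exact ⟨⟨S, hS⟩, x, hx.2, rfl⟩

/-- If the family of all `k`-subsets of `[n]` is partitioned into `u` intersecting
families `F_1, …, F_u`, then each `F_j` is contained in a family `K_j` that is either
(type i) all `k`-subsets meeting a fixed set `I_j` with `|I_j| ≤ s - 1`, or
(type ii) all `k`-subsets containing a member of a fixed family `G_j` of `s`-sets
with `|G_j| ≤ k^s`. -/
theorem stmt_13 (n k u s : ℕ) (hn : 0 < n) (hk : 0 < k) (hs : 2 ≤ s)
    (F : Fin u → Finset (Finset (Fin n)))
    (hcard : ∀ j, ∀ A ∈ F j, A.card = k)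
    (hint : ∀ j, ∀ A ∈ F j, ∀ B ∈ F j, (A ∩ B).Nonempty)
    (hpart : ∀ A : Finset (Fin n), A.card = k → ∃! j, A ∈ F j) :
    ∃ K : Fin u → Finset (Finset (Fin n)),
      ∀ j, F j ⊆ K j ∧
        ((∃ I : Finset (Fin n), I.card ≤ s - 1 ∧
            ∀ A : Finset (Fin n), A ∈ K j ↔ A.card = k ∧ ∃ i ∈ I, i ∈ A) ∨
         (∃ G : Finset (Finset (Fin n)), G.card ≤ k ^ s ∧ (∀ S ∈ G, S.card = s) ∧
            ∀ A : Finset (Fin n), A ∈ K j ↔ A.card = k ∧ ∃ S ∈ G, S ⊆ A)) := by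
  classical
  have key : ∀ j : Fin u, ∃ Kj : Finset (Finset (Fin n)),
      F j ⊆ Kj ∧
        ((∃ I : Finset (Fin n), I.card ≤ s - 1 ∧
            ∀ A : Finset (Fin n), A ∈ Kj ↔ A.card = k ∧ ∃ i ∈ I, i ∈ A) ∨
         (∃ G : Finset (Finset (Fin n)), G.card ≤ k ^ s ∧ (∀ S ∈ G, S.card = s) ∧
            ∀ A : Finset (Fin n), A ∈ Kj ↔ A.card = k ∧ ∃ S ∈ G, S ⊆ A)) := by
    intro j
    rcases dich_aux n k (F j) (hcard j) (hint j) s with ⟨I, hI1, hI2⟩ | ⟨G, hG1, hG2, hG3⟩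
    · refine ⟨(Finset.univ.powersetCard k).filter (fun A => ∃ i ∈ I, i ∈ A), ?_, Or.inl ⟨I, hI1, ?_⟩⟩
      · intro A hA
        simp only [Finset.mem_filter, Finset.mem_powersetCard_univ]
        exact ⟨hcard j A hA, hI2 A hA⟩
      · intro A
        simp [Finset.mem_filter, Finset.mem_powersetCard_univ]
    · refine ⟨(Finset.univ.powersetCard k).filter (fun A => ∃ S ∈ G, S ⊆ A), ?_,
        Or.inr ⟨G, hG1, hG2, ?_⟩⟩
      · intro A hA
        simp only [Finset.mem_filter, Finset.mem_powersetCard_univ]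
        exact ⟨hcard j A hA, hG3 A hA⟩
      · intro A
        simp [Finset.mem_filter, Finset.mem_powersetCard_univ]
  choose K hK using key
  exact ⟨K, hK⟩
end
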